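/- arXiv:2404.09600 — 3 statements merged into one kernel-verified Lean document; each statement's English description precedes it below -/
import Mathlib

section
/- For a single-mode Gaussian state with symplectic eigenvalue ν ∈ (1/2, ∞), the scalar curvature Scal(ν) = -[(2ν - f(ν) + 4ν² f(ν))(f(ν) + 2ν(-1 + 6ν f(ν)))] / [8ν²(4ν² - 1) f(ν)²], where f(ν) = arccoth(2ν), is strictly monotonically increasing in ν. -/
/-- `arccoth y = (1/2) ln((y+1)/(y-1))`. -/
noncomputable def arccoth (x : ℝ) : ℝ := (1/2) * Real.log ((x + 1) / (x - 1))

/-- The single-mode KMB scalar curvature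
`Scal(ν) = -[(2ν - f(ν) + 4ν² f(ν))(f(ν) + 2ν(-1 + 6ν f(ν)))] / [8ν²(4ν² - 1) f(ν)²]`
with `f(ν) = arccoth(2ν)`. -/
noncomputable def Scal1 (ν : ℝ) : ℝ :=
  -((2*ν - arccoth (2*ν) + 4*ν^2 * arccoth (2*ν))
      * (arccoth (2*ν) + 2*ν*(-1 + 6*ν*arccoth (2*ν))))
    / (8*ν^2*(4*ν^2 - 1) * (arccoth (2*ν))^2)

/-!
Put `t = arccoth (2ν) = artanh (1 / (2ν))`, so that `tanh t = 1 / (2ν)` and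
`sinh (2t) = 4ν / (4ν² - 1)`. Then `Scal1 ν = -(sinh (2t) / (2t) + 1) · (3 + tanh² t - tanh t / t) / 2`.
For `t > 0` both factors are positive and strictly increasing in `t`: `sinh x / x` increases because
`tanh x < x`, and `tanh x / x` decreases because `x < sinh x cosh x`. Since `t` strictly decreases
in `ν`, `Scal1` strictly increases.
-/

open Real Set

namespace Real

theorem sinh_lt_mul_cosh {x : ℝ} (hx : 0 < x) : sinh x < x * cosh x := by
  obtain ⟨c, ⟨hc0, hcx⟩, hc⟩ := exists_hasDerivAt_eq_slope sinh cosh hx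
    continuous_sinh.continuousOn fun y _ ↦ hasDerivAt_sinh y
  rw [sinh_zero, sub_zero, sub_zero, eq_div_iff hx.ne'] at hc
  have : cosh c < cosh x := cosh_lt_cosh.2 (by rw [abs_of_pos hc0, abs_of_pos hx]; exact hcx)
  nlinarith

theorem tanh_lt_self {x : ℝ} (hx : 0 < x) : tanh x < x := by
  rw [tanh_eq_sinh_div_cosh, div_lt_iff₀ (cosh_pos x)]
  exact sinh_lt_mul_cosh hx

theorem hasDerivAt_tanh (x : ℝ) : HasDerivAt tanh (1 / cosh x ^ 2) x := by
  have h := (hasDerivAt_sinh x).div (hasDerivAt_cosh x) (cosh_pos x).ne'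
  rw [show tanh = sinh / cosh from funext tanh_eq_sinh_div_cosh]
  exact h.congr_deriv (by rw [← cosh_sq_sub_sinh_sq x]; ring)

theorem tanh_strictMono : StrictMono tanh :=
  strictMono_of_hasDerivAt_pos hasDerivAt_tanh fun x ↦ by positivity

theorem strictMonoOn_sinh_div_self : StrictMonoOn (fun x ↦ sinh x / x) (Ioi 0) := by
  refine strictMonoOn_of_hasDerivWithinAt_pos (f' := fun x ↦ (cosh x * x - sinh x) / x ^ 2)
    (convex_Ioi 0) (continuous_sinh.continuousOn.div continuousOn_id fun x hx ↦ hx.ne')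
    (fun x hx ↦ ?_) fun x hx ↦ ?_
  · rw [interior_Ioi, mem_Ioi] at hx
    exact (((hasDerivAt_sinh x).fun_div (hasDerivAt_id' x) hx.ne').congr_deriv
      (by ring)).hasDerivWithinAt
  · rw [interior_Ioi, mem_Ioi] at hx
    have := sinh_lt_mul_cosh hx
    exact div_pos (by linarith) (by positivity)

theorem strictAntiOn_tanh_div_self : StrictAntiOn (fun x ↦ tanh x / x) (Ioi 0) := by
  refine strictAntiOn_of_hasDerivWithinAt_neg
    (f' := fun x ↦ (1 / cosh x ^ 2 * x - tanh x) / x ^ 2) (convex_Ioi 0)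
    (fun x hx ↦ ((hasDerivAt_tanh x).continuousAt.div continuousAt_id
      hx.ne').continuousWithinAt) (fun x hx ↦ ?_) fun x hx ↦ ?_
  · rw [interior_Ioi, mem_Ioi] at hx
    exact (((hasDerivAt_tanh x).fun_div (hasDerivAt_id' x) hx.ne').congr_deriv
      (by ring)).hasDerivWithinAt
  · rw [interior_Ioi, mem_Ioi] at hx
    have hsc : x < sinh x * cosh x := by
      nlinarith [self_lt_sinh_iff.2 hx, one_lt_cosh.2 hx.ne']
    have hc := cosh_pos x
    apply div_neg_of_neg_of_pos _ (by positivity)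
    rw [tanh_eq_sinh_div_cosh, div_mul_eq_mul_div, one_mul, sub_neg,
      div_lt_div_iff₀ (by positivity) hc]
    nlinarith

end Real

section arccoth

variable {x : ℝ}

theorem inv_mem_Ioo_neg_one_one (hx : 1 < x) : x⁻¹ ∈ Ioo (-1) 1 :=
  ⟨by linarith [inv_pos.2 (by linarith : (0 : ℝ) < x)], inv_lt_one_of_one_lt₀ hx⟩

theorem arccoth_eq_artanh_inv (hx : 1 < x) : arccoth x = artanh x⁻¹ := by
  rw [arccoth, artanh_eq_half_log (Ioo_subset_Icc_self (inv_mem_Ioo_neg_one_one hx))]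
  have : x ≠ 0 := by linarith
  congr 2
  field_simp

theorem arccoth_pos (hx : 1 < x) : 0 < arccoth x := by
  rw [arccoth_eq_artanh_inv hx]
  exact artanh_pos ⟨inv_pos.2 (by linarith), inv_lt_one_of_one_lt₀ hx⟩

theorem strictAntiOn_arccoth : StrictAntiOn arccoth (Ioi 1) := by
  intro a ha b hb hab
  rw [mem_Ioi] at ha hb
  rw [arccoth_eq_artanh_inv ha, arccoth_eq_artanh_inv hb]
  exact artanh_lt_artanh (inv_mem_Ioo_neg_one_one hb).1 (inv_mem_Ioo_neg_one_one ha).2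
    ((inv_lt_inv₀ (by linarith) (by linarith)).2 hab)

theorem tanh_arccoth (hx : 1 < x) : tanh (arccoth x) = x⁻¹ := by
  rw [arccoth_eq_artanh_inv hx, tanh_artanh (inv_mem_Ioo_neg_one_one hx)]

theorem sinh_two_mul_arccoth (hx : 1 < x) : sinh (2 * arccoth x) = 2 * x / (x ^ 2 - 1) := by
  have hmem := inv_mem_Ioo_neg_one_one hx
  have hsq : 0 < 1 - x⁻¹ ^ 2 := by nlinarith [hmem.1, hmem.2]
  rw [arccoth_eq_artanh_inv hx, sinh_two_mul, sinh_artanh hmem, cosh_artanh hmem, mul_assoc,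
    div_mul_div_comm, mul_one, mul_self_sqrt hsq.le]
  have : x ^ 2 - 1 ≠ 0 := by nlinarith
  field_simp

end arccoth

noncomputable def scalFactor₁ (t : ℝ) : ℝ := sinh (2 * t) / (2 * t) + 1

noncomputable def scalFactor₂ (t : ℝ) : ℝ := (3 + tanh t ^ 2 - tanh t / t) / 2

theorem scal1_eq_neg_scalFactor₁_mul_scalFactor₂ {ν : ℝ} (hν : 1 / 2 < ν) :
    Scal1 ν = -(scalFactor₁ (arccoth (2 * ν)) * scalFactor₂ (arccoth (2 * ν))) := by
  have hx : 1 < 2 * ν := by linarith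
  have ht := arccoth_pos hx
  -- the shape in which `field_simp` meets the denominator `4 * ν ^ 2 - 1`
  have hd : ν ^ 2 * 4 - 1 ≠ 0 := by nlinarith
  have hν0 : ν ≠ 0 := by positivity
  have ht0 := ht.ne'
  unfold Scal1 scalFactor₁ scalFactor₂
  rw [sinh_two_mul_arccoth hx, tanh_arccoth hx, mul_pow, show (2 : ℝ) ^ 2 = 4 by norm_num]
  field_simp
  ring

theorem scalFactor₁_pos {t : ℝ} (ht : 0 < t) : 0 < scalFactor₁ t := by
  have := div_pos (sinh_pos_iff.2 (by linarith : 0 < 2 * t)) (by linarith : 0 < 2 * t)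
  unfold scalFactor₁
  linarith

theorem scalFactor₂_pos {t : ℝ} (ht : 0 < t) : 0 < scalFactor₂ t := by
  have := (div_lt_one ht).2 (tanh_lt_self ht)
  unfold scalFactor₂
  nlinarith [sq_nonneg (tanh t)]

theorem strictMonoOn_scalFactor₁ : StrictMonoOn scalFactor₁ (Ioi 0) := by
  intro a ha b hb hab
  have := strictMonoOn_sinh_div_self (by simpa using ha : 0 < 2 * a)
    (by simpa using hb : 0 < 2 * b) (by linarith)
  simp only [scalFactor₁]
  linarith

theorem strictMonoOn_scalFactor₂ : StrictMonoOn scalFactor₂ (Ioi 0) := by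
  intro a ha b hb hab
  have hsq : tanh a ^ 2 < tanh b ^ 2 := by
    have := tanh_strictMono (mem_Ioi.1 ha)
    rw [tanh_zero] at this
    exact pow_lt_pow_left₀ (tanh_strictMono hab) this.le two_ne_zero
  have := strictAntiOn_tanh_div_self ha hb hab
  simp only [scalFactor₂]
  linarith

/-- The single-mode scalar curvature is strictly monotonically increasing on `(1/2, ∞)`. -/
theorem scal1_strictMonoOn : StrictMonoOn Scal1 (Set.Ioi (1/2 : ℝ)) := by
  intro a ha b hb hab
  have two_mul_mem {ν : ℝ} (hν : ν ∈ Ioi (1 / 2 : ℝ)) : 2 * ν ∈ Ioi 1 := by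
    rw [mem_Ioi] at hν ⊢; linarith
  have hlt : arccoth (2 * b) < arccoth (2 * a) :=
    strictAntiOn_arccoth (two_mul_mem ha) (two_mul_mem hb) (by linarith)
  have hta := arccoth_pos (two_mul_mem ha)
  have htb := arccoth_pos (two_mul_mem hb)
  rw [scal1_eq_neg_scalFactor₁_mul_scalFactor₂ ha, scal1_eq_neg_scalFactor₁_mul_scalFactor₂ hb,
    neg_lt_neg_iff]
  exact mul_lt_mul'' (strictMonoOn_scalFactor₁ htb hta hlt) (strictMonoOn_scalFactor₂ htb hta hlt)
    (scalFactor₁_pos htb).le (scalFactor₂_pos htb).le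
end

section
/- The single-mode KMB scalar curvature Scal(ν) = -[(2ν - f(ν) + 4ν² f(ν))(f(ν) + 2ν(-1 + 6ν f(ν)))] / [8ν²(4ν² - 1) f(ν)²], with f(ν) = arccoth(2ν), tends to -∞ as ν → 1/2 from above. -/
/-!
Put `y = 2ν` and `f = arccoth y`. Then
`Scal1 ν = -(y + (y² - 1) f) ((1 + 3y²) f - y) / (2y² (y² - 1) f²)`.
As `y → 1⁺`, `f` blows up only logarithmically, so `√(y - 1) f → 0`. Hence the first factor of
the numerator tends to `1`, the second to `+∞`, and the denominator to `0⁺`.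
-/

open Filter Real Topology

lemma tendsto_sub_one_nhdsGT_one : Tendsto (fun y : ℝ => y - 1) (𝓝[>] 1) (𝓝[>] 0) := by
  refine tendsto_nhdsWithin_iff.2 ⟨?_, ?_⟩
  · exact tendsto_nhdsWithin_of_tendsto_nhds <| (continuous_sub_right 1).tendsto' 1 0 (by simp)
  · filter_upwards [self_mem_nhdsWithin] with y (hy : 1 < y)
    exact sub_pos.2 hy

lemma tendsto_two_mul_nhdsGT_half : Tendsto (fun ν : ℝ => 2 * ν) (𝓝[>] (1/2)) (𝓝[>] 1) := by
  refine tendsto_nhdsWithin_iff.2 ⟨?_, ?_⟩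
  · exact tendsto_nhdsWithin_of_tendsto_nhds <|
      (continuous_const_mul 2).tendsto' (1/2) 1 (by norm_num)
  · filter_upwards [self_mem_nhdsWithin] with ν (hν : 1/2 < ν)
    exact show 1 < 2 * ν by linarith

lemma arccoth_pos_s13 {y : ℝ} (hy : 1 < y) : 0 < arccoth y := by
  have : 1 < (y + 1) / (y - 1) := by rw [one_lt_div (by linarith)]; linarith
  unfold arccoth
  have := log_pos this
  positivity

lemma tendsto_arccoth_nhdsGT_one : Tendsto arccoth (𝓝[>] 1) atTop := by
  have hnum : Tendsto (fun y : ℝ => y + 1) (𝓝[>] 1) (𝓝 2) :=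
    tendsto_nhdsWithin_of_tendsto_nhds <| (continuous_add_const 1).tendsto' 1 2 (by norm_num)
  have hquot : Tendsto (fun y : ℝ => (y + 1) / (y - 1)) (𝓝[>] 1) atTop := by
    simpa only [div_eq_mul_inv, Pi.inv_apply] using
      hnum.pos_mul_atTop two_pos tendsto_sub_one_nhdsGT_one.inv_tendsto_nhdsGT_zero
  exact (tendsto_log_atTop.comp hquot).const_mul_atTop one_half_pos

lemma tendsto_sqrt_sub_one_mul_arccoth_nhdsGT_one :
    Tendsto (fun y => √(y - 1) * arccoth y) (𝓝[>] 1) (𝓝 0) := by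
  have hsmooth : Tendsto (fun y => √(y - 1) * log (y + 1)) (𝓝[>] 1) (𝓝 0) := by
    have : ContinuousAt (fun y => √(y - 1) * log (y + 1)) 1 := by
      fun_prop (disch := norm_num)
    simpa using this.tendsto.mono_left nhdsWithin_le_nhds
  have hsing : Tendsto (fun y => log (y - 1) * (y - 1) ^ (1 / 2 : ℝ)) (𝓝[>] 1) (𝓝 0) :=
    (tendsto_log_mul_rpow_nhdsGT_zero one_half_pos).comp tendsto_sub_one_nhdsGT_one
  have := (hsmooth.sub hsing).const_mul (1 / 2)
  rw [sub_zero, mul_zero] at this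
  refine this.congr' ?_
  filter_upwards [self_mem_nhdsWithin] with y (hy : 1 < y)
  rw [arccoth, log_div (by linarith) (by linarith), sqrt_eq_rpow]
  ring

lemma tendsto_sq_sub_one_mul_arccoth_nhdsGT_one :
    Tendsto (fun y => (y ^ 2 - 1) * arccoth y) (𝓝[>] 1) (𝓝 0) := by
  have hfactor : Tendsto (fun y => (y + 1) * √(y - 1)) (𝓝[>] 1) (𝓝 0) :=
    tendsto_nhdsWithin_of_tendsto_nhds <|
      (by fun_prop : Continuous fun y : ℝ => (y + 1) * √(y - 1)).tendsto' 1 0 (by simp)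
  have := hfactor.mul tendsto_sqrt_sub_one_mul_arccoth_nhdsGT_one
  rw [zero_mul] at this
  refine this.congr' ?_
  filter_upwards [self_mem_nhdsWithin] with y (hy : 1 < y)
  linear_combination ((y + 1) * arccoth y) * mul_self_sqrt (sub_nonneg.2 hy.le)

lemma tendsto_sq_sub_one_mul_arccoth_sq_nhdsGT_one :
    Tendsto (fun y => (y ^ 2 - 1) * arccoth y ^ 2) (𝓝[>] 1) (𝓝[>] 0) := by
  refine tendsto_nhdsWithin_iff.2 ⟨?_, ?_⟩
  · have hadd : Tendsto (fun y : ℝ => y + 1) (𝓝[>] 1) (𝓝 2) :=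
      tendsto_nhdsWithin_of_tendsto_nhds <| (continuous_add_const 1).tendsto' 1 2 (by norm_num)
    have := hadd.mul (tendsto_sqrt_sub_one_mul_arccoth_nhdsGT_one.pow 2)
    rw [zero_pow two_ne_zero, mul_zero] at this
    refine this.congr' ?_
    filter_upwards [self_mem_nhdsWithin] with y (hy : 1 < y)
    linear_combination ((y + 1) * arccoth y ^ 2) * mul_self_sqrt (sub_nonneg.2 hy.le)
  · filter_upwards [self_mem_nhdsWithin] with y (hy : 1 < y)
    have := arccoth_pos_s13 hy
    have : 0 < y ^ 2 - 1 := by nlinarith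
    exact show 0 < (y ^ 2 - 1) * arccoth y ^ 2 by positivity

lemma Filter.Tendsto.mul_nhdsGT_zero_of_pos {α : Type*} {l : Filter α} {C D : α → ℝ} {c : ℝ}
    (hC : Tendsto C l (𝓝 c)) (hc : 0 < c) (hD : Tendsto D l (𝓝[>] 0)) :
    Tendsto (fun x => C x * D x) l (𝓝[>] 0) := by
  refine tendsto_nhdsWithin_iff.2 ⟨?_, ?_⟩
  · simpa using hC.mul (tendsto_nhds_of_tendsto_nhdsWithin hD)
  · filter_upwards [hC.eventually (lt_mem_nhds hc), hD.eventually self_mem_nhdsWithin]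
      with x hCx hDx
    exact mul_pos hCx hDx

lemma Filter.Tendsto.neg_mul_div_atBot {α : Type*} {l : Filter α} {A B D : α → ℝ} {a : ℝ}
    (hA : Tendsto A l (𝓝 a)) (ha : 0 < a) (hB : Tendsto B l atTop)
    (hD : Tendsto D l (𝓝[>] 0)) : Tendsto (fun x => -(A x * B x) / D x) l atBot := by
  have := hA.pos_mul_atTop ha (hB.atTop_mul_atTop₀ hD.inv_tendsto_nhdsGT_zero)
  refine (tendsto_neg_atTop_atBot.comp this).congr fun x => ?_
  simp only [Function.comp, Pi.inv_apply, mul_assoc, div_eq_mul_inv, neg_mul]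

/-- The single-mode scalar curvature tends to `-∞` as `ν → 1/2⁺`. -/
theorem scal1_tendsto_atBot :
    Filter.Tendsto Scal1 (nhdsWithin (1/2) (Set.Ioi (1/2 : ℝ))) Filter.atBot := by
  have hA : Tendsto (fun y => y + (y ^ 2 - 1) * arccoth y) (𝓝[>] 1) (𝓝 1) := by
    simpa using (tendsto_nhdsWithin_of_tendsto_nhds tendsto_id).add
      tendsto_sq_sub_one_mul_arccoth_nhdsGT_one
  have hB : Tendsto (fun y => (1 + 3 * y ^ 2) * arccoth y - y) (𝓝[>] 1) atTop := by
    have hcoef : Tendsto (fun y : ℝ => 1 + 3 * y ^ 2) (𝓝[>] 1) (𝓝 4) :=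
      tendsto_nhdsWithin_of_tendsto_nhds <|
        (by fun_prop : Continuous fun y : ℝ => 1 + 3 * y ^ 2).tendsto' 1 4 (by norm_num)
    simpa only [sub_eq_add_neg, id] using
      (hcoef.pos_mul_atTop four_pos tendsto_arccoth_nhdsGT_one).atTop_add
        (tendsto_nhdsWithin_of_tendsto_nhds tendsto_id.neg)
  have hD : Tendsto (fun y => 2 * y ^ 2 * ((y ^ 2 - 1) * arccoth y ^ 2)) (𝓝[>] 1) (𝓝[>] 0) := by
    have hcoef : Tendsto (fun y : ℝ => 2 * y ^ 2) (𝓝[>] 1) (𝓝 2) :=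
      tendsto_nhdsWithin_of_tendsto_nhds <|
        (by fun_prop : Continuous fun y : ℝ => 2 * y ^ 2).tendsto' 1 2 (by norm_num)
    exact hcoef.mul_nhdsGT_zero_of_pos two_pos tendsto_sq_sub_one_mul_arccoth_sq_nhdsGT_one
  refine ((hA.neg_mul_div_atBot one_pos hB hD).comp tendsto_two_mul_nhdsGT_half).congr
    fun ν => ?_
  simp only [Function.comp, Scal1]
  congr 1 <;> ring
end

section
/- For all ν > 1/2, with f(ν) = arccoth(2ν), one has 2ν - f(ν) + 4ν² f(ν) > 0 and f(ν) + 2ν(-1 + 6ν f(ν)) > 0; consequently the single-mode KMB scalar curvature Scal(ν) is strictly negative on (1/2, ∞). -/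
lemma arccoth_lb {y : ℝ} (hy : 1 < y) : 1/(y+1) < arccoth y := by
  have hy1 : (0:ℝ) < y - 1 := by linarith
  have hy2 : (0:ℝ) < y + 1 := by linarith
  set u : ℝ := (y + 1) / (y - 1) with hu
  have hu1 : 1 < u := (one_lt_div hy1).2 (by linarith)
  have hupos : 0 < u := by linarith
  have hinv : Real.log u⁻¹ < u⁻¹ - 1 :=
    Real.log_lt_sub_one_of_pos (inv_pos.2 hupos) (by
      intro h
      have : u = 1 := by field_simp at h; linarith
      linarith)
  rw [Real.log_inv] at hinv
  have hlog : 1 - u⁻¹ < Real.log u := by linarith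
  have huinv : u⁻¹ = (y - 1) / (y + 1) := by
    rw [hu, inv_div]
  have h1 : 1 - u⁻¹ = 2 / (y + 1) := by
    rw [huinv]; field_simp; norm_num
  rw [h1] at hlog
  have : 1/(y+1) < (1/2) * Real.log u := by
    have h2 : 2 / (y+1) = 2 * (1/(y+1)) := by ring
    nlinarith
  simpa [arccoth] using this

/-- For all `ν > 1/2`: both curvature factors are positive, and hence
`Scal(ν) < 0` on `(1/2, ∞)`. -/
theorem scal1_neg (ν : ℝ) (hν : 1/2 < ν) :
    0 < 2*ν - arccoth (2*ν) + 4*ν^2 * arccoth (2*ν) ∧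
    0 < arccoth (2*ν) + 2*ν*(-1 + 6*ν*arccoth (2*ν)) ∧
    Scal1 ν < 0 := by
  have hy : (1:ℝ) < 2*ν := by linarith
  have hlb : 1/(2*ν+1) < arccoth (2*ν) := arccoth_lb hy
  have hpos : 0 < arccoth (2*ν) := lt_trans (by positivity) hlb
  have h2ν1 : (0:ℝ) < 2*ν + 1 := by linarith
  have hf1 : 0 < 2*ν - arccoth (2*ν) + 4*ν^2 * arccoth (2*ν) := by nlinarith [mul_pos (show (0:ℝ) < 4*ν^2 - 1 by nlinarith) hpos]
  have hf2 : 0 < arccoth (2*ν) + 2*ν*(-1 + 6*ν*arccoth (2*ν)) := by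
    have h : (1/(2*ν+1)) * (1 + 12*ν^2) < arccoth (2*ν) * (1 + 12*ν^2) := by
      apply mul_lt_mul_of_pos_right hlb; positivity
    have h2 : 2*ν < (1/(2*ν+1)) * (1 + 12*ν^2) := by
      rw [div_mul_eq_mul_div, lt_div_iff₀ h2ν1]; nlinarith
    nlinarith
  refine ⟨hf1, hf2, ?_⟩
  have hden : 0 < 8*ν^2*(4*ν^2 - 1) * (arccoth (2*ν))^2 := by
    have : (0:ℝ) < 4*ν^2 - 1 := by nlinarith [mul_pos (show (0:ℝ) < 4*ν^2 - 1 by nlinarith) hpos]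
    positivity
  have hnum : -((2*ν - arccoth (2*ν) + 4*ν^2 * arccoth (2*ν))
      * (arccoth (2*ν) + 2*ν*(-1 + 6*ν*arccoth (2*ν)))) < 0 := by
    have := mul_pos hf1 hf2; linarith
  exact div_neg_of_neg_of_pos hnum hden
end
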